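/- arXiv:2212.02744 — 8 statements merged into one kernel-verified Lean document; each statement's English description precedes it below -/
import Mathlib

section
/- Let A be an n×n real symmetric matrix, g a nonzero vector in R^n, and Δ > 0. If x* satisfies ‖x*‖ ≤ Δ and there exists λ* ≥ 0 such that (A + λ*I)x* = -g, λ*(Δ - ‖x*‖) = 0, and A + λ*I is positive semidefinite, then x* is a global minimizer of f(x) = (1/2)xᵀAx + xᵀg over the ball {x : ‖x‖ ≤ Δ}. -/
open Matrix

noncomputable def enormR {n : ℕ} (x : Fin n → ℝ) : ℝ := Real.sqrt (x ⬝ᵥ x)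

lemma dot_self_nonneg {n : ℕ} (x : Fin n → ℝ) : 0 ≤ x ⬝ᵥ x :=
  Finset.sum_nonneg fun i _ => mul_self_nonneg (x i)

lemma dot_self_eq_sq {n : ℕ} (x : Fin n → ℝ) : x ⬝ᵥ x = (enormR x) ^ 2 := by
  rw [enormR, Real.sq_sqrt (dot_self_nonneg x)]

lemma enorm_nonneg {n : ℕ} (x : Fin n → ℝ) : 0 ≤ enormR x := Real.sqrt_nonneg _

/-- Sufficiency direction of the global optimality characterization of the
trust-region subproblem. -/
theorem trs_global_optimality {n : ℕ} (A : Matrix (Fin n) (Fin n) ℝ)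
    (hA : A.IsSymm) (g : Fin n → ℝ) (hg : g ≠ 0) (Δ : ℝ) (hΔ : 0 < Δ)
    (xs : Fin n → ℝ) (lams : ℝ) (hlam : 0 ≤ lams)
    (hxs : enormR xs ≤ Δ)
    (heq : (A + lams • (1 : Matrix (Fin n) (Fin n) ℝ)).mulVec xs = -g)
    (hcomp : lams * (Δ - enormR xs) = 0)
    (hpsd : (A + lams • (1 : Matrix (Fin n) (Fin n) ℝ)).PosSemidef) :
    ∀ x : Fin n → ℝ, enormR x ≤ Δ →
      (1 / 2) * (xs ⬝ᵥ A.mulVec xs) + xs ⬝ᵥ g ≤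
        (1 / 2) * (x ⬝ᵥ A.mulVec x) + x ⬝ᵥ g := by
  intro x hx
  set B := A + lams • (1 : Matrix (Fin n) (Fin n) ℝ) with hB
  -- key positive semidefiniteness inequality
  have key : 0 ≤ (x - xs) ⬝ᵥ B.mulVec (x - xs) := by
    have := hpsd.dotProduct_mulVec_nonneg (x - xs)
    simpa using this
  -- expand B.mulVec
  have hBv : ∀ v : Fin n → ℝ, B.mulVec v = A.mulVec v + lams • v := by
    intro v
    simp [hB, Matrix.add_mulVec, Matrix.smul_mulVec, Matrix.one_mulVec]
  -- symmetry
  have hsymm : x ⬝ᵥ A.mulVec xs = xs ⬝ᵥ A.mulVec x := by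
    rw [Matrix.dotProduct_mulVec, ← Matrix.mulVec_transpose, hA.eq, dotProduct_comm]
  -- from the stationarity equation
  have h1 : x ⬝ᵥ A.mulVec xs + lams * (x ⬝ᵥ xs) = -(x ⬝ᵥ g) := by
    have := congrArg (fun v => x ⬝ᵥ v) heq
    simpa [hBv, dotProduct_add, dotProduct_smul, smul_eq_mul,
      dotProduct_neg] using this
  have h2 : xs ⬝ᵥ A.mulVec xs + lams * (xs ⬝ᵥ xs) = -(xs ⬝ᵥ g) := by
    have := congrArg (fun v => xs ⬝ᵥ v) heq
    simpa [hBv, dotProduct_add, dotProduct_smul, smul_eq_mul,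
      dotProduct_neg] using this
  -- complementarity
  have hcomp' : lams * (x ⬝ᵥ x - xs ⬝ᵥ xs) ≤ 0 := by
    rcases mul_eq_zero.mp hcomp with h | h
    · simp [h]
    · have hxseq : enormR xs = Δ := by linarith
      have hxx : x ⬝ᵥ x ≤ xs ⬝ᵥ xs := by
        rw [dot_self_eq_sq, dot_self_eq_sq, hxseq]
        have := enorm_nonneg x
        nlinarith
      have : x ⬝ᵥ x - xs ⬝ᵥ xs ≤ 0 := by linarith
      exact mul_nonpos_of_nonneg_of_nonpos hlam this
  -- expand key
  have hcx : xs ⬝ᵥ x = x ⬝ᵥ xs := dotProduct_comm _ _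
  have key' : 0 ≤ x ⬝ᵥ A.mulVec x - 2 * (x ⬝ᵥ A.mulVec xs) + xs ⬝ᵥ A.mulVec xs
      + lams * (x ⬝ᵥ x - 2 * (x ⬝ᵥ xs) + xs ⬝ᵥ xs) := by
    have hexp : (x - xs) ⬝ᵥ B.mulVec (x - xs)
        = x ⬝ᵥ A.mulVec x - 2 * (x ⬝ᵥ A.mulVec xs) + xs ⬝ᵥ A.mulVec xs
          + lams * (x ⬝ᵥ x - 2 * (x ⬝ᵥ xs) + xs ⬝ᵥ xs) := by
      rw [hBv]
      simp only [Matrix.mulVec_sub, sub_dotProduct, dotProduct_sub,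
        dotProduct_add, smul_sub, dotProduct_smul, smul_eq_mul]
      rw [hsymm, hcx]
      ring
    linarith [hexp ▸ key]
  linarith
end

section
/- Let A be an n×n real symmetric matrix and λ* a real number such that A + λ*I is positive definite. Then for any c ≠ 0 and any λ ∈ C, the 2n×2n matrix M = [[-A, ggᵀ/Δ²],[I, -A]] satisfies det(M - (λ* + ci)I) = (det(A + (λ*+ci)I)²/Δ²)·(Δ² - Σᵢ (uᵢᵀg)²/(αᵢ + λ* + ci)²), where (αᵢ, uᵢ) are the eigenpairs of A. -/
open Matrix Complex

/-- Determinant factorization of the shifted TRS matrix `M = [[-A, ggᵀ/Δ²],[I, -A]]`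
at the complex shift `λ* + c i`, in terms of the eigenpairs `(αᵢ, uᵢ)` of `A`. -/
theorem det_TRS_matrix_shift {n : ℕ} (A : Matrix (Fin n) (Fin n) ℝ) (hA : A.IsSymm)
    (g : Fin n → ℝ) (Δ : ℝ) (hΔ : 0 < Δ)
    (α : Fin n → ℝ) (u : Fin n → Fin n → ℝ)
    (heig : ∀ i, A.mulVec (u i) = α i • u i)
    (horth : ∀ i j, u i ⬝ᵥ u j = if i = j then (1 : ℝ) else 0)
    (lams : ℝ)
    (hpd : (A + lams • (1 : Matrix (Fin n) (Fin n) ℝ)).PosDef)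
    (c : ℝ) (hc : c ≠ 0) :
    let M : Matrix (Fin n ⊕ Fin n) (Fin n ⊕ Fin n) ℝ :=
      Matrix.fromBlocks (-A) ((Δ ^ 2)⁻¹ • vecMulVec g g) 1 (-A)
    let z : ℂ := (lams : ℂ) + (c : ℂ) * Complex.I
    (M.map (fun t => (t : ℂ)) - z • (1 : Matrix (Fin n ⊕ Fin n) (Fin n ⊕ Fin n) ℂ)).det =
      ((A.map (fun t => (t : ℂ)) + z • (1 : Matrix (Fin n) (Fin n) ℂ)).det) ^ 2 / (Δ : ℂ) ^ 2 *
        ((Δ : ℂ) ^ 2 - ∑ i, ((u i ⬝ᵥ g : ℝ) : ℂ) ^ 2 / ((α i : ℂ) + z) ^ 2) := by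
  intro M z
  have hz : z = (lams : ℂ) + (c : ℂ) * Complex.I := rfl
  have hMdef : M = Matrix.fromBlocks (-A) ((Δ ^ 2)⁻¹ • vecMulVec g g) 1 (-A) := rfl
  set gC : Fin n → ℂ := fun i => (g i : ℂ) with hgC
  set Q : Matrix (Fin n) (Fin n) ℂ := Matrix.of (fun i j => (u i j : ℂ)) with hQ
  have hαz : ∀ i, (α i : ℂ) + z ≠ 0 := by
    intro i h
    apply hc
    have := congrArg Complex.im h
    simpa [hz] using this
  have hQQt : Q * Qᵀ = 1 := by
    ext i j
    have h := horth i j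
    simp only [dotProduct] at h
    simp only [Matrix.mul_apply, Matrix.transpose_apply, Matrix.one_apply, hQ, Matrix.of_apply]
    rw [show ∑ k, ((u i k : ℂ) * (u j k : ℂ)) = ((∑ k, u i k * u j k : ℝ) : ℂ) by
      push_cast; rfl, h]
    split <;> simp
  have hQtQ : Qᵀ * Q = 1 := mul_eq_one_comm.mp hQQt
  set B : Matrix (Fin n) (Fin n) ℂ := A.map (fun t => (t : ℂ)) + z • 1 with hBdef
  set D : Matrix (Fin n) (Fin n) ℂ := Matrix.diagonal (fun i => (α i : ℂ) + z) with hD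
  set E : Matrix (Fin n) (Fin n) ℂ := Matrix.diagonal (fun i => ((α i : ℂ) + z)⁻¹) with hE
  have hQB : Q * B = D * Q := by
    ext i j
    have hre : ∑ k, u i k * A k j = α i * u i j := by
      have := congrFun (heig i) j
      simp only [Matrix.mulVec, dotProduct, Pi.smul_apply, smul_eq_mul] at this
      rw [← this]
      refine Finset.sum_congr rfl fun k _ => ?_
      rw [mul_comm]
      congr 1
      exact hA.apply j k
    simp only [Matrix.mul_apply, hBdef, hD, Matrix.add_apply, Matrix.map_apply,
      Matrix.smul_apply, Matrix.one_apply, Matrix.diagonal_apply, hQ, Matrix.of_apply,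
      smul_eq_mul, mul_add, Finset.sum_add_distrib, mul_ite, mul_one, mul_zero,
      Finset.sum_ite_eq', Finset.sum_ite_eq, Finset.mem_univ, if_true, ite_mul, zero_mul]
    rw [show ∑ k, ((u i k : ℂ) * (A k j : ℂ)) = ((∑ k, u i k * A k j : ℝ) : ℂ) by
      push_cast; rfl, hre]
    push_cast
    ring
  have hB : B = Qᵀ * D * Q := by
    calc B = (Qᵀ * Q) * B := by rw [hQtQ, Matrix.one_mul]
    _ = Qᵀ * (Q * B) := by rw [Matrix.mul_assoc]
    _ = Qᵀ * D * Q := by rw [hQB, Matrix.mul_assoc]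
  set N : Matrix (Fin n) (Fin n) ℂ := Qᵀ * E * Q with hN
  have key : ∀ (X Y : Matrix (Fin n) (Fin n) ℂ),
      (Qᵀ * X * Q) * (Qᵀ * Y * Q) = Qᵀ * (X * Y) * Q := by
    intro X Y
    calc (Qᵀ * X * Q) * (Qᵀ * Y * Q) = Qᵀ * (X * ((Q * Qᵀ) * (Y * Q))) := by
          simp only [Matrix.mul_assoc]
    _ = Qᵀ * (X * Y) * Q := by rw [hQQt, Matrix.one_mul]; simp only [Matrix.mul_assoc]
  have hDE : D * E = 1 := by
    rw [hD, hE, Matrix.diagonal_mul_diagonal]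
    rw [show (fun i => ((α i : ℂ) + z) * ((α i : ℂ) + z)⁻¹) = fun _ => (1 : ℂ) from
      funext fun i => mul_inv_cancel₀ (hαz i)]
    exact Matrix.diagonal_one
  have hBN : B * N = 1 := by rw [hB, hN, key, hDE, Matrix.mul_one, hQtQ]
  have hdetB : IsUnit B.det :=
    IsUnit.of_mul_eq_one N.det (by rw [← Matrix.det_mul, hBN, Matrix.det_one])
  have hBinv : B⁻¹ = N := Matrix.inv_eq_right_inv hBN
  set W : Matrix (Fin n) (Fin n) ℂ := ((Δ : ℂ) ^ 2)⁻¹ • vecMulVec gC gC with hW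
  have hM : M.map (fun t => (t : ℂ)) - z • 1 = Matrix.fromBlocks (-B) W 1 (-B) := by
    ext i j
    rcases i with i | i <;> rcases j with j | j <;>
      simp only [hMdef, hW, hBdef, hgC, Matrix.sub_apply, Matrix.map_apply,
        Matrix.fromBlocks_apply₁₁, Matrix.fromBlocks_apply₁₂, Matrix.fromBlocks_apply₂₁,
        Matrix.fromBlocks_apply₂₂, Matrix.smul_apply, Matrix.one_apply,
        Matrix.vecMulVec_apply, Matrix.neg_apply, Matrix.add_apply, smul_eq_mul,
        Sum.inl.injEq, Sum.inr.injEq, reduceCtorEq, if_false] <;>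
      first
      | (split_ifs <;> push_cast <;> ring)
      | (push_cast; ring)
  haveI : Invertible (-B) :=
    invertibleOfRightInverse (-B) (-N) (by rw [neg_mul_neg, hBN])
  have hinvneg : ⅟(-B) = -N :=
    (Matrix.invOf_eq_nonsing_inv (-B)).trans
      (Matrix.inv_eq_right_inv (by rw [neg_mul_neg, hBN]))
  rw [hM, Matrix.det_fromBlocks₂₂, hinvneg]
  have h2 : -B - W * (-N) * 1 = -(B - W * N) := by
    rw [Matrix.mul_one, Matrix.mul_neg]; abel
  rw [h2, Matrix.det_neg, Matrix.det_neg]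
  set v : Fin n → ℂ := gC ᵥ* N with hv
  set w1 : Fin n → ℂ := fun i => -((Δ : ℂ) ^ 2)⁻¹ * gC i with hw1
  have hsub : B - W * N =
      B + Matrix.replicateCol (Fin 1) w1 * Matrix.replicateRow (Fin 1) v := by
    ext i j
    simp only [Matrix.sub_apply, Matrix.add_apply, hW, Matrix.smul_apply,
      Matrix.mul_apply, Matrix.vecMulVec_apply, smul_eq_mul, Matrix.replicateCol_apply,
      Matrix.replicateRow_apply, Finset.univ_unique, Finset.sum_singleton, hv,
      Matrix.vecMul, dotProduct, Finset.mul_sum, hw1]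
    rw [sub_eq_add_neg, ← Finset.sum_neg_distrib]
    congr 1
    refine Finset.sum_congr rfl fun k _ => ?_
    ring
  have hscal : (Matrix.replicateRow (Fin 1) v * N * Matrix.replicateCol (Fin 1) w1) 0 0 =
      -(((Δ : ℂ) ^ 2)⁻¹ * ((v ᵥ* N) ⬝ᵥ gC)) := by
    simp only [Matrix.mul_apply, Matrix.replicateRow_apply, Matrix.replicateCol_apply, Finset.univ_unique,
      Finset.sum_singleton, Matrix.vecMul, dotProduct, hw1]
    rw [Finset.mul_sum, ← Finset.sum_neg_distrib]
    refine Finset.sum_congr rfl fun k _ => ?_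
    ring
  rw [hsub, Matrix.det_add_mul (Matrix.replicateCol (Fin 1) w1) (Matrix.replicateRow (Fin 1) v) hdetB,
    hBinv, Matrix.det_fin_one,
    Matrix.add_apply, Matrix.one_apply_eq, hscal]
  -- key computation
  have hh : Q *ᵥ gC = fun i => ((u i ⬝ᵥ g : ℝ) : ℂ) := by
    funext i
    simp only [Matrix.mulVec, dotProduct, hQ, Matrix.of_apply, hgC]
    push_cast
    rfl
  have hvQ : v = (fun i => ((u i ⬝ᵥ g : ℝ) : ℂ) * ((α i : ℂ) + z)⁻¹) ᵥ* Q := by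
    have hde : ((fun i => ((u i ⬝ᵥ g : ℝ) : ℂ)) ᵥ* E) =
        fun i => ((u i ⬝ᵥ g : ℝ) : ℂ) * ((α i : ℂ) + z)⁻¹ := by
      funext i
      rw [hE]
      exact Matrix.vecMul_diagonal _ _ _
    rw [hv, hN, ← Matrix.vecMul_vecMul, ← Matrix.vecMul_vecMul, Matrix.vecMul_transpose, hh,
      hde]
  set a : Fin n → ℂ := fun i => ((u i ⬝ᵥ g : ℝ) : ℂ) * ((α i : ℂ) + z)⁻¹ with ha
  have hvN : v ᵥ* N =
      (fun i => a i * ((α i : ℂ) + z)⁻¹) ᵥ* Q := by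
    rw [hvQ, hN, Matrix.vecMul_vecMul,
      show Q * (Qᵀ * E * Q) = (Q * Qᵀ) * (E * Q) by simp only [Matrix.mul_assoc],
      hQQt, Matrix.one_mul, ← Matrix.vecMul_vecMul]
    have hde : (a ᵥ* E) = fun i => a i * ((α i : ℂ) + z)⁻¹ := by
      funext i
      rw [hE]
      exact Matrix.vecMul_diagonal _ _ _
    rw [hde]
  have hkey : (v ᵥ* N) ⬝ᵥ gC =
      ∑ i, ((u i ⬝ᵥ g : ℝ) : ℂ) ^ 2 / ((α i : ℂ) + z) ^ 2 := by
    rw [hvN, ← Matrix.dotProduct_mulVec, hh]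
    simp only [dotProduct, ha]
    refine Finset.sum_congr rfl fun i _ => ?_
    rw [sq, sq, div_eq_mul_inv, mul_inv]
    ring
  rw [hkey, Fintype.card_fin]
  have hsign : ((-1 : ℂ)) ^ n * ((-1 : ℂ)) ^ n = 1 := by
    rw [← mul_pow]; norm_num
  rw [mul_mul_mul_comm, hsign, one_mul]
  have hΔC : (Δ : ℂ) ≠ 0 := by
    simpa using hΔ.ne'
  field_simp
  ring
end

section
/- Let A be an n×n real symmetric matrix with smallest eigenvalue αₙ, let λ* > 0 satisfy λ* + αₙ > 0, and suppose λ* is an eigenvalue of M = [[-A, ggᵀ/Δ²],[I, -A]]. Then for every real c ≠ 0, the complex number λ* + ci is not an eigenvalue of M. In particular, λ* is strictly greater than the real part of every other eigenvalue of M, given that λ* is the rightmost eigenvalue. -/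
open Matrix Complex

/-- If the TRS is in the easy case (`λ* + αₙ > 0`, `λ* > 0`) and `λ*` is the rightmost
eigenvalue of `M = [[-A, ggᵀ/Δ²],[I, -A]]`, then no `λ* + c i` with `c ≠ 0` is an
eigenvalue of `M`, and `λ*` strictly dominates the real part of every other eigenvalue. -/
theorem rightmost_eigenvalue_strict {n : ℕ} (A : Matrix (Fin n) (Fin n) ℝ) (hA : A.IsSymm)
    (g : Fin n → ℝ) (hg : g ≠ 0) (Δ : ℝ) (hΔ : 0 < Δ) (hn : 0 < n)
    (α : Fin n → ℝ) (U : Matrix (Fin n) (Fin n) ℝ)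
    (hU : U ∈ Matrix.orthogonalGroup (Fin n) ℝ)
    (hdec : ∀ i j : Fin n, i ≤ j → α j ≤ α i)
    (hspec : A = U * Matrix.diagonal α * Uᵀ)
    (lams : ℝ) (hlam : 0 < lams)
    (heasy : 0 < lams + α ⟨n - 1, by omega⟩)
    (M : Matrix (Fin n ⊕ Fin n) (Fin n ⊕ Fin n) ℝ)
    (hM : M = Matrix.fromBlocks (-A) ((Δ ^ 2)⁻¹ • vecMulVec g g) 1 (-A))
    (hev : ∃ v : (Fin n ⊕ Fin n) → ℝ, v ≠ 0 ∧ M.mulVec v = lams • v)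
    (hrightmost : ∀ μ : ℂ, (∃ w : (Fin n ⊕ Fin n) → ℂ, w ≠ 0 ∧
        (M.map (fun t => (t : ℂ))).mulVec w = μ • w) → μ.re ≤ lams) :
    (∀ c : ℝ, c ≠ 0 → ¬ ∃ w : (Fin n ⊕ Fin n) → ℂ, w ≠ 0 ∧
        (M.map (fun t => (t : ℂ))).mulVec w =
          ((lams : ℂ) + (c : ℂ) * Complex.I) • w) ∧
    (∀ μ : ℂ, (∃ w : (Fin n ⊕ Fin n) → ℂ, w ≠ 0 ∧
        (M.map (fun t => (t : ℂ))).mulVec w = μ • w) → μ ≠ (lams : ℂ) → μ.re < lams) := by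
  -- orthogonality facts
  rw [Matrix.mem_orthogonalGroup_iff] at hU
  have hUU' : U * Uᵀ = 1 := hU
  have hUU : Uᵀ * U = 1 := mul_eq_one_comm.mp hU
  -- positivity of lams + α i
  have hapos : ∀ i : Fin n, 0 < lams + α i := by
    intro i
    have hle : α ⟨n - 1, by omega⟩ ≤ α i := by
      apply hdec
      rw [Fin.le_def]
      simp only []
      omega
    linarith
  -- complexified matrices
  set f : ℝ → ℂ := fun t => (t : ℂ) with hfdef
  have hfh : f = ⇑Complex.ofRealHom := rfl
  set Uc : Matrix (Fin n) (Fin n) ℂ := U.map f with hUc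
  set Ac : Matrix (Fin n) (Fin n) ℂ := A.map f with hAcdef
  set Dc : Matrix (Fin n) (Fin n) ℂ := Matrix.diagonal (fun i => (α i : ℂ)) with hDc
  set gc : Fin n → ℂ := fun i => (g i : ℂ) with hgc
  have hmapmul : ∀ (B C : Matrix (Fin n) (Fin n) ℝ), (B * C).map f = B.map f * C.map f := by
    intro B C; rw [hfh]; exact Matrix.map_mul
  have hone : (1 : Matrix (Fin n) (Fin n) ℝ).map f = 1 := by
    rw [hfh]; exact Matrix.map_one _ (map_zero _) (map_one _)
  have hUcU : Ucᵀ * Uc = 1 := by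
    have h := congrArg (fun X : Matrix (Fin n) (Fin n) ℝ => X.map f) hUU
    simp only [hmapmul, hone] at h
    rw [hUc, ← Matrix.transpose_map]
    exact h
  have hUUc : Uc * Ucᵀ = 1 := mul_eq_one_comm.mp hUcU
  have hAc : Ac = Uc * Dc * Ucᵀ := by
    have h := congrArg (fun X : Matrix (Fin n) (Fin n) ℝ => X.map f) hspec
    simp only [hmapmul] at h
    rw [hAcdef, h, Matrix.transpose_map]
    congr 2
    rw [hDc, hfh]
    exact Matrix.diagonal_map (map_zero _)
  have hUAc : Ucᵀ * Ac = Dc * Ucᵀ := by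
    rw [hAc, ← Matrix.mul_assoc, ← Matrix.mul_assoc, hUcU, Matrix.one_mul]
  -- d = Uᵀ g
  set d : Fin n → ℝ := Uᵀ *ᵥ g with hd
  set dc : Fin n → ℂ := fun i => (d i : ℂ) with hdc
  have hgd : U *ᵥ d = g := by rw [hd, Matrix.mulVec_mulVec, hUU', Matrix.one_mulVec]
  have hdne : d ≠ 0 := by
    intro h0
    apply hg
    rw [← hgd, h0, Matrix.mulVec_zero]
  have hdcU : Ucᵀ *ᵥ gc = dc := by
    funext i
    simp only [Matrix.mulVec, dotProduct, hdc, hd, Matrix.transpose_apply,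
      Matrix.map_apply, hUc, hgc, hfdef]
    push_cast
    rfl
  have hgcd : Uc *ᵥ dc = gc := by
    rw [← hdcU, Matrix.mulVec_mulVec, hUUc, Matrix.one_mulVec]
  -- the key statement
  have key : ∀ c : ℝ, c ≠ 0 → ¬ ∃ w : (Fin n ⊕ Fin n) → ℂ, w ≠ 0 ∧
      (M.map (fun t => (t : ℂ))).mulVec w = ((lams : ℂ) + (c : ℂ) * Complex.I) • w := by
    rintro c hcne ⟨w, hw0, hw⟩
    set μ : ℂ := (lams : ℂ) + (c : ℂ) * Complex.I with hμ
    set x : Fin n → ℂ := w ∘ Sum.inl with hx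
    set y : Fin n → ℂ := w ∘ Sum.inr with hy
    set a : Fin n → ℝ := fun i => lams + α i with ha
    set z : Fin n → ℂ := fun i => μ + (α i : ℂ) with hz
    have hzre : ∀ i, (z i).re = a i := by intro i; simp [hz, hμ, ha]
    have hzim : ∀ i, (z i).im = c := by intro i; simp [hz, hμ]
    have hzne : ∀ i, z i ≠ 0 := by
      intro i h0
      have := congrArg Complex.im h0
      rw [hzim i] at this
      exact hcne (by simpa using this)
    -- M.map as fromBlocks
    have hMc : M.map f = Matrix.fromBlocks (-Ac) (((Δ : ℂ) ^ 2)⁻¹ • Matrix.vecMulVec gc gc) 1 (-Ac) := by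
      rw [hM, Matrix.fromBlocks_map]
      have h1 : (-A).map f = -Ac := by ext i j; simp [hfdef, hAcdef]
      have h2 : ((Δ ^ 2)⁻¹ • vecMulVec g g).map f
          = ((Δ : ℂ) ^ 2)⁻¹ • Matrix.vecMulVec gc gc := by
        ext i j
        simp only [Matrix.map_apply, Matrix.smul_apply, Matrix.vecMulVec_apply,
          smul_eq_mul, hfdef, hgc]
        push_cast
        ring
      rw [h1, h2, hone]
    have hw' := hw
    rw [show (fun t : ℝ => (t : ℂ)) = f from rfl, hMc] at hw'
    have hwelim : w = Sum.elim x y := by funext t; cases t <;> rfl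
    rw [hwelim] at hw'
    rw [show Sum.elim x y = Sum.elim ((Sum.elim x y) ∘ Sum.inl) ((Sum.elim x y) ∘ Sum.inr) by
      funext t; cases t <;> rfl] at hw'
    simp only [Sum.elim_comp_inl, Sum.elim_comp_inr] at hw'
    rw [Matrix.fromBlocks_mulVec] at hw'
    have heq1 : (-Ac) *ᵥ x + (((Δ : ℂ)^2)⁻¹ • Matrix.vecMulVec gc gc) *ᵥ y = μ • x := by
      have h := congrArg (fun v => v ∘ Sum.inl) hw'
      funext i; have := congrFun h i; simpa using this
    have heq2 : x + (-Ac) *ᵥ y = μ • y := by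
      have h := congrArg (fun v => v ∘ Sum.inr) hw'
      funext i; have := congrFun h i; simpa [Matrix.one_mulVec] using this
    -- coordinates
    set p : Fin n → ℂ := Ucᵀ *ᵥ x with hp
    set q : Fin n → ℂ := Ucᵀ *ᵥ y with hq
    have hxp : Uc *ᵥ p = x := by rw [hp, Matrix.mulVec_mulVec, hUUc, Matrix.one_mulVec]
    have hyq : Uc *ᵥ q = y := by rw [hq, Matrix.mulVec_mulVec, hUUc, Matrix.one_mulVec]
    have hUAcV : ∀ v : Fin n → ℂ, Ucᵀ *ᵥ ((-Ac) *ᵥ v) = -(Dc *ᵥ (Ucᵀ *ᵥ v)) := by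
      intro v
      rw [Matrix.neg_mulVec, Matrix.mulVec_neg, Matrix.mulVec_mulVec, hUAc,
        ← Matrix.mulVec_mulVec]
    have heq2v : p + -(Dc *ᵥ q) = μ • q := by
      have h := congrArg (fun v => Ucᵀ *ᵥ v) heq2
      simp only [Matrix.mulVec_add, Matrix.mulVec_smul] at h
      rw [hUAcV y] at h
      exact h
    have heq2' : ∀ i, p i = z i * q i := by
      intro i
      have h := congrFun heq2v i
      simp only [Pi.add_apply, Pi.neg_apply, Pi.smul_apply, smul_eq_mul, hDc,
        Matrix.mulVec_diagonal] at h
      rw [show z i = μ + (α i : ℂ) from rfl]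
      linear_combination h
    -- vecMulVec action
    have hvmv : Matrix.vecMulVec gc gc *ᵥ y = (gc ⬝ᵥ y) • gc := by
      funext i
      simp only [Matrix.mulVec, dotProduct, Matrix.vecMulVec_apply, Pi.smul_apply,
        smul_eq_mul, Finset.sum_mul]
      exact Finset.sum_congr rfl (fun j _ => by ring)
    set s : ℂ := gc ⬝ᵥ y with hs
    have hsq : dc ⬝ᵥ q = s := by
      rw [hq, Matrix.dotProduct_mulVec, Matrix.vecMul_transpose, hgcd]
    have heq1v : -(Dc *ᵥ p) + ((Δ:ℂ)^2)⁻¹ • (s • dc) = μ • p := by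
      have h := congrArg (fun v => Ucᵀ *ᵥ v) heq1
      simp only [Matrix.mulVec_add] at h
      rw [hUAcV x, Matrix.smul_mulVec, hvmv, Matrix.mulVec_smul, Matrix.mulVec_smul,
        hdcU, Matrix.mulVec_smul] at h
      rw [← hp] at h
      exact h
    have heq1' : ∀ i, ((Δ:ℂ)^2)⁻¹ * (s * dc i) = z i * p i := by
      intro i
      have h := congrFun heq1v i
      simp only [Pi.add_apply, Pi.neg_apply, Pi.smul_apply, smul_eq_mul, hDc,
        Matrix.mulVec_diagonal] at h
      rw [show z i = μ + (α i : ℂ) from rfl]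
      linear_combination h
    have hkey : ∀ i, z i ^ 2 * q i = ((Δ:ℂ)^2)⁻¹ * (s * dc i) := by
      intro i
      rw [heq1' i, heq2' i]
      ring
    by_cases hs0 : s = 0
    · -- eigenvector must vanish
      apply hw0
      have hq0 : q = 0 := by
        funext i
        have h := hkey i
        rw [hs0, zero_mul, mul_zero] at h
        rcases mul_eq_zero.mp h with h' | h'
        · exact absurd h' (pow_ne_zero 2 (hzne i))
        · exact h'
      have hy0 : y = 0 := by rw [← hyq, hq0, Matrix.mulVec_zero]
      have hp0 : p = 0 := by
        funext i
        rw [heq2' i, hq0]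
        simp
      have hx0 : x = 0 := by rw [← hxp, hp0, Matrix.mulVec_zero]
      rw [hwelim, hx0, hy0]
      funext t; cases t <;> rfl
    · -- secular equation
      have hΔc : ((Δ:ℂ)^2) ≠ 0 :=
        pow_ne_zero 2 (Complex.ofReal_ne_zero.mpr hΔ.ne')
      have hqform : ∀ i, q i = ((Δ:ℂ)^2)⁻¹ * (s * dc i) / z i ^ 2 := by
        intro i
        rw [← hkey i]
        field_simp [pow_ne_zero 2 (hzne i)]
        rw [mul_div_assoc, div_self (hzne i), mul_one]
      have hsum : s = ((Δ:ℂ)^2)⁻¹ * s * ∑ i, dc i ^ 2 / z i ^ 2 := by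
        conv_lhs => rw [← hsq]
        rw [dotProduct, Finset.mul_sum]
        refine Finset.sum_congr rfl (fun i _ => ?_)
        rw [hqform i]
        ring
      have hT : ∑ i, dc i ^ 2 / z i ^ 2 = (Δ:ℂ)^2 := by
        have h := hsum
        exact mul_left_cancel₀ hs0 (by
          conv_rhs => rw [h]
          rw [mul_comm _ ((Δ:ℂ)^2), ← mul_assoc, ← mul_assoc, mul_inv_cancel₀ hΔc, one_mul])
      -- imaginary parts
      have hterm : ∀ i, (dc i ^ 2 / z i ^ 2).im
          = -(d i ^ 2 * (2 * a i * c) / ((a i ^ 2 + c ^ 2) ^ 2)) := by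
        intro i
        have h2 : (z i ^ 2).im = 2 * a i * c := by
          rw [sq, Complex.mul_im, hzre, hzim]; ring
        have h3 : Complex.normSq (z i ^ 2) = (a i ^ 2 + c ^ 2) ^ 2 := by
          rw [map_pow Complex.normSq (z i) 2]
          rw [Complex.normSq_apply, hzre, hzim]
          ring
        have h4 : dc i ^ 2 = ((d i ^ 2 : ℝ) : ℂ) := by
          rw [hdc]; push_cast; ring
        rw [div_eq_mul_inv, h4, Complex.mul_im, Complex.ofReal_re, Complex.ofReal_im,
          Complex.inv_im, Complex.inv_re, h2, h3]
        ring
      have him0 : (0:ℝ) = ∑ i, (dc i ^ 2 / z i ^ 2).im := by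
        rw [← Complex.im_sum, hT,
          show ((Δ:ℂ)^2) = ((Δ^2 : ℝ) : ℂ) by push_cast; ring, Complex.ofReal_im]
      have hfac : ∑ i, (dc i ^ 2 / z i ^ 2).im
          = (-2 * c) * ∑ i, d i ^ 2 * a i / ((a i ^ 2 + c ^ 2) ^ 2) := by
        rw [Finset.mul_sum]
        refine Finset.sum_congr rfl (fun i _ => ?_)
        rw [hterm i]
        ring
      have hzero : ∑ i, d i ^ 2 * a i / ((a i ^ 2 + c ^ 2) ^ 2) = 0 := by
        have h := him0
        rw [hfac] at h
        rcases mul_eq_zero.mp h.symm with h' | h'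
        · exact absurd (by linarith [h'] : c = 0) hcne
        · exact h'
      have hd0 : ∀ i ∈ Finset.univ, d i ^ 2 * a i / ((a i ^ 2 + c ^ 2) ^ 2) = 0 := by
        rw [← Finset.sum_eq_zero_iff_of_nonneg]
        · exact hzero
        · intro i _
          have h1 : 0 < a i := hapos i
          positivity
      apply hdne
      funext i
      have h := hd0 i (Finset.mem_univ i)
      have h1 : 0 < a i := hapos i
      have h2 : (0:ℝ) < (a i ^ 2 + c ^ 2) ^ 2 := by positivity
      have h3 : d i ^ 2 * a i = 0 := by
        rw [div_eq_zero_iff] at h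
        rcases h with h' | h'
        · exact h'
        · exact absurd h' (by positivity)
      have h4 : d i ^ 2 = 0 := by
        rcases mul_eq_zero.mp h3 with h' | h'
        · exact h'
        · exact absurd h' h1.ne'
      exact pow_eq_zero_iff (n := 2) (by norm_num) |>.mp h4
  refine ⟨key, ?_⟩
  intro μ hμev hne
  have hle := hrightmost μ hμev
  rcases lt_or_eq_of_le hle with h | h
  · exact h
  · exfalso
    have him : μ.im ≠ 0 := by
      intro h0
      exact hne (Complex.ext (by simpa using h) (by simpa using h0))
    apply key μ.im him
    obtain ⟨w, hw0, hw⟩ := hμev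
    refine ⟨w, hw0, ?_⟩
    rw [hw]
    congr 1
    exact (Complex.ext (by simp [h]) (by simp)).symm
end

section
/- Let A* be an n×n symmetric positive definite matrix and y₁ ∈ R^n a nonzero vector, and set y₂ = A*⁻¹y₁. Then 1 ≤ (‖y₁‖·‖y₂‖)/(y₁ᵀy₂) ≤ √(κ(A*)), where κ(A*) = ‖A*‖·‖A*⁻¹‖ is the spectral condition number. -/
open Matrix

noncomputable def enorm' {m : Type*} [Fintype m] (x : m → ℝ) : ℝ := Real.sqrt (x ⬝ᵥ x)

noncomputable def specNorm {n : ℕ} (A : Matrix (Fin n) (Fin n) ℝ) : ℝ :=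
  ‖Matrix.toEuclideanCLM (𝕜 := ℝ) A‖

lemma dot_self_pos {n : ℕ} {z : Fin n → ℝ} (hz : z ≠ 0) : 0 < z ⬝ᵥ z := by
  simp only [dotProduct]
  rcases (Finset.sum_nonneg fun i (_ : i ∈ Finset.univ) =>
      mul_self_nonneg (z i)).lt_or_eq with h | h
  · exact h
  · exfalso
    apply hz
    funext i
    have := (Finset.sum_eq_zero_iff_of_nonneg
      (fun i (_ : i ∈ Finset.univ) => mul_self_nonneg (z i))).mp h.symm i (Finset.mem_univ i)
    exact mul_self_eq_zero.mp this

/-- Cauchy–Schwarz for the bilinear form of a positive semidefinite real matrix. -/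
lemma psd_cs {n : ℕ} {A : Matrix (Fin n) (Fin n) ℝ} (hA : A.PosSemidef)
    (u v : Fin n → ℝ) :
    (u ⬝ᵥ A.mulVec v) ^ 2 ≤ (u ⬝ᵥ A.mulVec u) * (v ⬝ᵥ A.mulVec v) := by
  have hAt : Aᵀ = A := by
    have := hA.1
    simpa [Matrix.IsHermitian, Matrix.conjTranspose_eq_transpose_of_trivial] using this
  have hsym : ∀ a b : Fin n → ℝ, a ⬝ᵥ A.mulVec b = b ⬝ᵥ A.mulVec a := by
    intro a b
    calc a ⬝ᵥ A.mulVec b = a ᵥ* A ⬝ᵥ b := Matrix.dotProduct_mulVec a A b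
      _ = (Aᵀ.mulVec a) ⬝ᵥ b := by rw [Matrix.mulVec_transpose]
      _ = (A.mulVec a) ⬝ᵥ b := by rw [hAt]
      _ = b ⬝ᵥ A.mulVec a := dotProduct_comm _ _
  have key : ∀ t : ℝ, 0 ≤ (v ⬝ᵥ A.mulVec v) * (t * t) + (2 * (u ⬝ᵥ A.mulVec v)) * t
      + (u ⬝ᵥ A.mulVec u) := by
    intro t
    have h0 := hA.dotProduct_mulVec_nonneg (u + t • v)
    have h0' : 0 ≤ (u + t • v) ⬝ᵥ A.mulVec (u + t • v) := by simpa using h0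
    have hvu := hsym v u
    simp only [Matrix.mulVec_add, Matrix.mulVec_smul, dotProduct_add,
      add_dotProduct, smul_dotProduct, dotProduct_smul,
      smul_eq_mul] at h0'
    rw [hvu] at h0'
    nlinarith [h0']
  have hd := discrim_le_zero key
  rw [discrim] at hd
  nlinarith [hd]

lemma quad_le_specNorm {n : ℕ} (A : Matrix (Fin n) (Fin n) ℝ) (x : Fin n → ℝ) :
    x ⬝ᵥ A.mulVec x ≤ specNorm A * (enorm' x) ^ 2 := by
  set X : EuclideanSpace ℝ (Fin n) := (WithLp.equiv 2 _).symm x with hX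
  have h1 : x ⬝ᵥ A.mulVec x = inner ℝ X (Matrix.toEuclideanCLM (𝕜 := ℝ) A X) := by
    rw [hX, WithLp.equiv_symm_apply, Matrix.toEuclideanCLM_toLp, EuclideanSpace.inner_toLp_toLp]
    simp [dotProduct_comm]
  have h2 : enorm' x = ‖X‖ := by
    have h : (x ⬝ᵥ x : ℝ) = inner ℝ X X := by
      rw [hX, WithLp.equiv_symm_apply, EuclideanSpace.inner_toLp_toLp]; simp
    rw [enorm', h, real_inner_self_eq_norm_sq]
    exact Real.sqrt_sq (norm_nonneg X)
  rw [h1, h2, specNorm]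
  calc inner ℝ X (Matrix.toEuclideanCLM (𝕜 := ℝ) A X)
      ≤ ‖X‖ * ‖Matrix.toEuclideanCLM (𝕜 := ℝ) A X‖ := real_inner_le_norm _ _
    _ ≤ ‖X‖ * (‖Matrix.toEuclideanCLM (𝕜 := ℝ) A‖ * ‖X‖) := by
        gcongr
        exact (Matrix.toEuclideanCLM (𝕜 := ℝ) A).le_opNorm X
    _ = ‖Matrix.toEuclideanCLM (𝕜 := ℝ) A‖ * ‖X‖ ^ 2 := by ring

/-- `‖x‖⁴ ≤ (xᵀAx)(xᵀA⁻¹x)` for `A` positive definite. -/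
lemma quad_lower {n : ℕ} {A : Matrix (Fin n) (Fin n) ℝ} (hA : A.PosDef)
    (x : Fin n → ℝ) :
    (x ⬝ᵥ x) ^ 2 ≤ (x ⬝ᵥ A.mulVec x) * (x ⬝ᵥ A⁻¹.mulVec x) := by
  have hdet : IsUnit A.det := hA.det_pos.ne'.isUnit
  have h := psd_cs hA.posSemidef x (A⁻¹.mulVec x)
  have h1 : A.mulVec (A⁻¹.mulVec x) = x := by
    rw [Matrix.mulVec_mulVec, Matrix.mul_nonsing_inv A hdet, Matrix.one_mulVec]
  rw [h1] at h
  have h2 : A⁻¹.mulVec x ⬝ᵥ x = x ⬝ᵥ A⁻¹.mulVec x := dotProduct_comm _ _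
  rw [h2] at h
  nlinarith [h]

/-- For a symmetric positive definite `A*` and `y₂ = A*⁻¹ y₁` with `y₁ ≠ 0`:
`1 ≤ ‖y₁‖‖y₂‖/(y₁ᵀy₂) ≤ √κ(A*)`. -/
theorem condition_number_bound {n : ℕ} (As : Matrix (Fin n) (Fin n) ℝ)
    (hAs : As.PosDef) (y₁ : Fin n → ℝ) (hy₁ : y₁ ≠ 0) (y₂ : Fin n → ℝ)
    (hy₂ : y₂ = As⁻¹.mulVec y₁) :
    1 ≤ enorm' y₁ * enorm' y₂ / (y₁ ⬝ᵥ y₂) ∧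
    enorm' y₁ * enorm' y₂ / (y₁ ⬝ᵥ y₂) ≤ Real.sqrt (specNorm As * specNorm As⁻¹) := by
  have hBpd : (As⁻¹).PosDef := hAs.inv
  have hdet : IsUnit As.det := hAs.det_pos.ne'.isUnit
  have hc : 0 < y₁ ⬝ᵥ y₂ := by
    rw [hy₂]
    have := hBpd.dotProduct_mulVec_pos hy₁
    simpa using this
  set c := y₁ ⬝ᵥ y₂ with hcdef
  have hy₁eq : As.mulVec y₂ = y₁ := by
    rw [hy₂, Matrix.mulVec_mulVec, Matrix.mul_nonsing_inv As hdet, Matrix.one_mulVec]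
  have hself : ∀ z : Fin n → ℝ, 0 ≤ z ⬝ᵥ z := fun z => by
    exact Finset.sum_nonneg fun i _ => mul_self_nonneg _
  have hsq : ∀ z : Fin n → ℝ, enorm' z ^ 2 = z ⬝ᵥ z := fun z =>
    Real.sq_sqrt (hself z)
  have henn : ∀ z : Fin n → ℝ, 0 ≤ enorm' z := fun z => Real.sqrt_nonneg _
  have hns1 : (0 : ℝ) ≤ specNorm As := norm_nonneg _
  have hns2 : (0 : ℝ) ≤ specNorm As⁻¹ := norm_nonneg _
  -- Cauchy–Schwarz lower bound
  have hCS : c ≤ enorm' y₁ * enorm' y₂ := by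
    have h1 : c * c ≤ (y₁ ⬝ᵥ y₁) * (y₂ ⬝ᵥ y₂) := by
      have := psd_cs (Matrix.PosDef.posSemidef
        (Matrix.PosDef.one (n := Fin n) (R := ℝ))) y₁ y₂
      simpa [Matrix.one_mulVec, sq] using this
    nlinarith [hsq y₁, hsq y₂, henn y₁, henn y₂, hc, mul_nonneg (henn y₁) (henn y₂)]
  refine ⟨(one_le_div hc).mpr hCS, ?_⟩
  -- upper bound
  have hN1 : enorm' y₁ ^ 2 ≤ specNorm As * c := by
    have hl := quad_lower hAs y₁
    have hq := quad_le_specNorm As y₁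
    have hcc : y₁ ⬝ᵥ As⁻¹.mulVec y₁ = c := by rw [hcdef, hy₂]
    rw [hcc] at hl
    have hp : 0 < y₁ ⬝ᵥ y₁ := dot_self_pos hy₁
    have h3 : (y₁ ⬝ᵥ y₁) ^ 2 ≤ (specNorm As * (enorm' y₁) ^ 2) * c :=
      hl.trans (by nlinarith [hc.le, hq])
    rw [hsq y₁]
    rw [hsq y₁] at h3
    nlinarith [h3, hp]
  have hy₂ne : y₂ ≠ 0 := by
    intro h
    rw [hcdef, h] at hc
    simp at hc
  have hN2 : enorm' y₂ ^ 2 ≤ specNorm As⁻¹ * c := by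
    have hl := quad_lower hBpd y₂
    have hq := quad_le_specNorm As⁻¹ y₂
    rw [Matrix.nonsing_inv_nonsing_inv As hdet] at hl
    have hcc : y₂ ⬝ᵥ As.mulVec y₂ = c := by
      rw [hy₁eq, dotProduct_comm, hcdef]
    rw [hcc] at hl
    have hp : 0 < y₂ ⬝ᵥ y₂ := dot_self_pos hy₂ne
    have h3 : (y₂ ⬝ᵥ y₂) ^ 2 ≤ (specNorm As⁻¹ * (enorm' y₂) ^ 2) * c := by
      calc (y₂ ⬝ᵥ y₂) ^ 2 ≤ (y₂ ⬝ᵥ As⁻¹.mulVec y₂) * c := hl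
        _ ≤ (specNorm As⁻¹ * (enorm' y₂) ^ 2) * c := by nlinarith [hc.le, hq]
    rw [hsq y₂]
    rw [hsq y₂] at h3
    nlinarith [h3, hp]
  have hr0 : 0 ≤ enorm' y₁ * enorm' y₂ / c := le_trans zero_le_one ((one_le_div hc).mpr hCS)
  rw [Real.le_sqrt hr0, div_pow, div_le_iff₀ (by positivity)]
  calc (enorm' y₁ * enorm' y₂) ^ 2 = enorm' y₁ ^ 2 * enorm' y₂ ^ 2 := by ring
    _ ≤ (specNorm As * c) * (specNorm As⁻¹ * c) := by
        apply mul_le_mul hN1 hN2 (by positivity) (mul_nonneg hns1 hc.le)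
    _ = specNorm As * specNorm As⁻¹ * c ^ 2 := by ring
  exact mul_nonneg hns1 hns2
end

section
/- Let W ∈ R^{n×n}, c, d ∈ R^n with c ∈ range(W), d ∈ range(Wᵀ), and 1 + dᵀW†c = 0 (equivalently 1 + cᵀ(W†)ᵀd = 0 appropriately interpreted). Set f = W†c and h = (W†)ᵀd. Then the Moore–Penrose inverse of W + cdᵀ is (W + cdᵀ)† = W† - (ffᵀW†)/‖f‖² - (W†hhᵀ)/‖h‖² + (ffᵀW†hhᵀ)/(‖f‖²‖h‖²). -/
open Matrix

private lemma mul_vmv {n : ℕ} (M : Matrix (Fin n) (Fin n) ℝ) (a b : Fin n → ℝ) :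
    M * vecMulVec a b = vecMulVec (M *ᵥ a) b := by
  ext i j
  simp [mul_apply, vecMulVec_apply, mulVec, dotProduct, Finset.sum_mul, mul_assoc]

private lemma vmv_mul {n : ℕ} (M : Matrix (Fin n) (Fin n) ℝ) (a b : Fin n → ℝ) :
    vecMulVec a b * M = vecMulVec a (b ᵥ* M) := by
  ext i j
  simp [mul_apply, vecMulVec_apply, vecMul, dotProduct, Finset.mul_sum, mul_assoc]

private lemma vmv_vmv {n : ℕ} (a b a' b' : Fin n → ℝ) :
    vecMulVec a b * vecMulVec a' b' = (b ⬝ᵥ a') • vecMulVec a b' := by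
  ext i j
  simp only [mul_apply, vecMulVec_apply, Matrix.smul_apply, dotProduct, Finset.sum_mul, smul_eq_mul]
  exact Finset.sum_congr rfl fun k _ => by ring

private lemma vmv_transpose {n : ℕ} (a b : Fin n → ℝ) :
    (vecMulVec a b)ᵀ = vecMulVec b a := by
  ext i j; simp [vecMulVec_apply, mul_comm]

private lemma vmv_mulVec {n : ℕ} (a b x : Fin n → ℝ) :
    vecMulVec a b *ᵥ x = (b ⬝ᵥ x) • a := by
  ext i
  simp only [vecMulVec_apply, mulVec, dotProduct, Pi.smul_apply, smul_eq_mul, Finset.sum_mul]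
  exact Finset.sum_congr rfl fun k _ => by ring

private lemma vecMul_vmv {n : ℕ} (x a b : Fin n → ℝ) :
    x ᵥ* vecMulVec a b = (x ⬝ᵥ a) • b := by
  ext j
  simp only [vecMul, vecMulVec_apply, dotProduct, Pi.smul_apply, smul_eq_mul, Finset.sum_mul]
  exact Finset.sum_congr rfl fun k _ => by ring

private lemma vmv_smul_left {n : ℕ} (r : ℝ) (a b : Fin n → ℝ) :
    vecMulVec (r • a) b = r • vecMulVec a b := by
  ext i j; simp [vecMulVec_apply, mul_assoc]

private lemma vmv_smul_right {n : ℕ} (r : ℝ) (a b : Fin n → ℝ) :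
    vecMulVec a (r • b) = r • vecMulVec a b := by
  ext i j; simp [vecMulVec_apply]; ring

/-- `X` satisfies the four Penrose conditions for `W`, i.e. `X = W†`. -/
def IsMoorePenrose {n : ℕ} (W X : Matrix (Fin n) (Fin n) ℝ) : Prop :=
  W * X * W = W ∧ X * W * X = X ∧ (W * X)ᵀ = W * X ∧ (X * W)ᵀ = X * W

/-- Rank-one update formula for the Moore–Penrose inverse (Campbell–Meyer):
if `c ∈ range W`, `d ∈ range Wᵀ` and `1 + dᵀW†c = 0`, with `f = W†c`, `h = (W†)ᵀd`,
then `(W + cdᵀ)† = W† - ffᵀW†/‖f‖² - W†hhᵀ/‖h‖² + ffᵀW†hhᵀ/(‖f‖²‖h‖²)`. -/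
theorem pseudoinverse_rank_one_update {n : ℕ} (W Wd : Matrix (Fin n) (Fin n) ℝ)
    (hWd : IsMoorePenrose W Wd) (c d : Fin n → ℝ)
    (hc : ∃ u, W.mulVec u = c) (hd : ∃ v, Wᵀ.mulVec v = d)
    (hsum : 1 + d ⬝ᵥ Wd.mulVec c = 0)
    (f h : Fin n → ℝ) (hf : f = Wd.mulVec c) (hh : h = Wdᵀ.mulVec d)
    (hf0 : f ≠ 0) (hh0 : h ≠ 0) :
    IsMoorePenrose (W + vecMulVec c d)
      (Wd - (f ⬝ᵥ f)⁻¹ • (vecMulVec f f * Wd) - (h ⬝ᵥ h)⁻¹ • (Wd * vecMulVec h h) +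
        ((f ⬝ᵥ f) * (h ⬝ᵥ h))⁻¹ • (vecMulVec f f * Wd * vecMulVec h h)) := by
  obtain ⟨hWXW, hXWX, hs1, hs2⟩ := hWd
  obtain ⟨u, hu⟩ := hc
  obtain ⟨v, hv⟩ := hd
  have hα : f ⬝ᵥ f ≠ 0 := fun e => hf0 (dotProduct_self_eq_zero.mp e)
  have hβ : h ⬝ᵥ h ≠ 0 := fun e => hh0 (dotProduct_self_eq_zero.mp e)
  -- basic vector facts
  have hWf : W *ᵥ f = c := by
    rw [hf, ← hu]
    simp only [mulVec_mulVec]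
    rw [← Matrix.mul_assoc, hWXW]
  have hWdc : Wd *ᵥ c = f := hf.symm
  have hWth : Wᵀ *ᵥ h = d := by
    rw [hh, ← hv]
    simp only [mulVec_mulVec]
    have e : Wᵀ * Wdᵀ * Wᵀ = Wᵀ := by
      rw [← transpose_mul, ← transpose_mul, ← Matrix.mul_assoc, hWXW]
    rw [← Matrix.mul_assoc, e]
  have hWWdh : W *ᵥ (Wd *ᵥ h) = h := by
    rw [hh]
    simp only [mulVec_mulVec]
    have e : W * Wd * Wdᵀ = Wdᵀ := by
      calc W * Wd * Wdᵀ = (W * Wd)ᵀ * Wdᵀ := by rw [hs1]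
        _ = (Wd * (W * Wd))ᵀ := by rw [← transpose_mul]
        _ = Wdᵀ := by rw [← Matrix.mul_assoc, hXWX]
    rw [← Matrix.mul_assoc, e]
  have hdf : d ⬝ᵥ f = -1 := by rw [hf]; linarith
  have hdWd : d ᵥ* Wd = h := by rw [← mulVec_transpose, ← hh]
  have hhW : h ᵥ* W = d := by rw [← mulVec_transpose, hWth]
  have hhc : h ⬝ᵥ c = -1 := by
    rw [hh, mulVec_transpose, ← dotProduct_mulVec, hf] at *
    linarith
  have hgW : (f ᵥ* Wd) ᵥ* W = f := by
    rw [vecMul_vecMul, ← mulVec_transpose, hs2, ← mulVec_mulVec, hWf, hWdc]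
  have hgc : (f ᵥ* Wd) ⬝ᵥ c = f ⬝ᵥ f := by rw [← dotProduct_mulVec, hWdc]
  -- the key simp set reduces every product to combinations of rank-one atoms
  refine ⟨?_, ?_, ?_, ?_⟩
  · -- A X A = A
    simp only [add_mul, mul_add, sub_mul, mul_sub, smul_mul_assoc, mul_smul_comm,
      Matrix.mul_assoc, mul_vmv, vmv_mul, vmv_vmv, Matrix.vecMul_vecMul,
      ← Matrix.mulVec_mulVec, Matrix.dotProduct_mulVec,
      vmv_mulVec, vecMul_vmv, vmv_smul_left, vmv_smul_right, Matrix.mulVec_smul, dotProduct_smul, smul_dotProduct, hWf, hWdc, hWth, hWWdh, hdWd, hhW, hgW, hgc, hdf, hhc, hWXW, hXWX,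
      smul_smul]
    match_scalars <;> (field_simp; try ring)
  · -- X A X = X
    simp only [add_mul, mul_add, sub_mul, mul_sub, smul_mul_assoc, mul_smul_comm,
      Matrix.mul_assoc, mul_vmv, vmv_mul, vmv_vmv, Matrix.vecMul_vecMul,
      ← Matrix.mulVec_mulVec, Matrix.dotProduct_mulVec,
      vmv_mulVec, vecMul_vmv, vmv_smul_left, vmv_smul_right, Matrix.mulVec_smul, dotProduct_smul, smul_dotProduct, hWf, hWdc, hWth, hWWdh, hdWd, hhW, hgW, hgc, hdf, hhc, hWXW, hXWX,
      smul_smul]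
    match_scalars <;> (field_simp; try ring)
  · -- (A X)ᵀ = A X
    simp only [add_mul, mul_add, sub_mul, mul_sub, smul_mul_assoc, mul_smul_comm,
      Matrix.mul_assoc, mul_vmv, vmv_mul, vmv_vmv, Matrix.vecMul_vecMul,
      ← Matrix.mulVec_mulVec, Matrix.dotProduct_mulVec,
      vmv_mulVec, vecMul_vmv, vmv_smul_left, vmv_smul_right, Matrix.mulVec_smul, dotProduct_smul, smul_dotProduct, hWf, hWdc, hWth, hWWdh, hdWd, hhW, hgW, hgc, hdf, hhc, hWXW, hXWX,
      smul_smul, transpose_add, transpose_sub, transpose_smul, transpose_mul,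
      vmv_transpose, hs1, hs2]
    match_scalars <;> (field_simp; try ring)
  · -- (X A)ᵀ = X A
    simp only [add_mul, mul_add, sub_mul, mul_sub, smul_mul_assoc, mul_smul_comm,
      Matrix.mul_assoc, mul_vmv, vmv_mul, vmv_vmv, Matrix.vecMul_vecMul,
      ← Matrix.mulVec_mulVec, Matrix.dotProduct_mulVec,
      vmv_mulVec, vecMul_vmv, vmv_smul_left, vmv_smul_right, Matrix.mulVec_smul, dotProduct_smul, smul_dotProduct, hWf, hWdc, hWth, hWWdh, hdWd, hhW, hgW, hgc, hdf, hhc, hWXW, hXWX,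
      smul_smul, transpose_add, transpose_sub, transpose_smul, transpose_mul,
      vmv_transpose, hs1, hs2]
    match_scalars <;> (field_simp; try ring)
end

section
/- Let A* be an n×n symmetric positive definite matrix with eigenvalues β₁ ≥ β₂ ≥ ... ≥ βₙ > 0, let x* ∈ R^n with ‖x*‖ = Δ > 0, P = I - x*x*ᵀ/Δ², and define s = ‖A*‖·‖(PA*P)†‖. Then β₁/β_{n-1} ≤ s ≤ β₁/βₙ; in particular 1 ≤ s ≤ κ(A*). -/
open Matrix

noncomputable def enorm₂ {m : Type*} [Fintype m] (x : m → ℝ) : ℝ := Real.sqrt (x ⬝ᵥ x)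

open scoped Matrix.Norms.L2Operator

lemma specNorm_eq_norm {n : ℕ} (A : Matrix (Fin n) (Fin n) ℝ) : specNorm A = ‖A‖ := rfl

lemma norm_conj_unitary {n : ℕ} (hn : 2 ≤ n) (V M : Matrix (Fin n) (Fin n) ℝ)
    (hV : V ∈ Matrix.unitaryGroup (Fin n) ℝ) : ‖V * M * Vᵀ‖ = ‖M‖ := by
  haveI : Nontrivial (Matrix (Fin n) (Fin n) ℝ) := by
    refine ⟨0, 1, fun h => ?_⟩
    have := congrFun (congrFun h ⟨0, by omega⟩) ⟨0, by omega⟩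
    simp at this
  have hV' : V ∈ unitary (Matrix (Fin n) (Fin n) ℝ) := hV
  have h1 : Vᵀ = star V := (conjTranspose_eq_transpose_of_trivial V).symm
  rw [h1, CStarRing.norm_mul_mem_unitary _ (Unitary.star_mem hV'),
    CStarRing.norm_mem_unitary_mul _ hV']

lemma diag_norm_le {n : ℕ} (v : Fin n → ℝ) (c : ℝ) (hc : 0 ≤ c) (h : ∀ i, |v i| ≤ c) :
    ‖diagonal v‖ ≤ c := by
  rw [Matrix.l2_opNorm_def]
  apply ContinuousLinearMap.opNorm_le_bound _ hc
  intro x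
  rw [LinearEquiv.trans_apply, LinearMap.coe_toContinuousLinearMap']
  have hx : ‖x‖ = Real.sqrt (∑ i, (x i)^2) := by
    rw [EuclideanSpace.norm_eq]
    exact congrArg _ (Finset.sum_congr rfl fun i _ => sq_abs _)
  have hy : ‖(toEuclideanLin (diagonal v) x : EuclideanSpace ℝ (Fin n))‖
      = Real.sqrt (∑ i, (v i * x i)^2) := by
    rw [EuclideanSpace.norm_eq]
    refine congrArg _ (Finset.sum_congr rfl fun i _ => ?_)
    have he : (toEuclideanLin (diagonal v) x : EuclideanSpace ℝ (Fin n)) i = v i * x i := by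
      show (diagonal v *ᵥ (WithLp.equiv _ _ x)) i = _
      rw [mulVec_diagonal]
      rfl
    rw [he, Real.norm_eq_abs, sq_abs]
  rw [hx, hy, ← Real.sqrt_sq hc, ← Real.sqrt_mul (by positivity)]
  apply Real.sqrt_le_sqrt
  rw [Finset.mul_sum]
  apply Finset.sum_le_sum
  intro i _
  rw [mul_pow]
  have h2 : v i ^ 2 ≤ c ^ 2 := by
    calc v i ^ 2 = |v i| ^ 2 := (sq_abs _).symm
    _ ≤ c ^ 2 := pow_le_pow_left₀ (abs_nonneg _) (h i) 2
  exact mul_le_mul_of_nonneg_right h2 (sq_nonneg _)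

lemma le_diag_norm {n : ℕ} (v : Fin n → ℝ) (i : Fin n) : |v i| ≤ ‖diagonal v‖ := by
  rw [Matrix.l2_opNorm_def]
  have h := (toEuclideanLin (𝕜 := ℝ) (diagonal v)).toContinuousLinearMap.unit_le_opNorm
    (EuclideanSpace.single i (1:ℝ)) (by rw [EuclideanSpace.norm_single]; simp)
  have hval : (toEuclideanLin (diagonal v) (EuclideanSpace.single i (1:ℝ))
      : EuclideanSpace ℝ (Fin n)) = EuclideanSpace.single i (v i) := by
    apply PiLp.ext
    intro j
    show (diagonal v *ᵥ (WithLp.equiv _ _ (EuclideanSpace.single i (1:ℝ)))) j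
      = EuclideanSpace.single i (v i) j
    rw [mulVec_diagonal]
    rcases eq_or_ne j i with rfl | hj
    · simp
    · simp [EuclideanSpace.single_apply, hj]
  have key : ‖(LinearMap.toContinuousLinearMap (toEuclideanLin (𝕜 := ℝ) (diagonal v)))
      (EuclideanSpace.single i (1:ℝ))‖ = |v i| := by
    show ‖(toEuclideanLin (diagonal v) (EuclideanSpace.single i (1:ℝ)) : EuclideanSpace ℝ (Fin n))‖ = _
    rw [hval, EuclideanSpace.norm_single]
    rfl
  exact le_trans key.ge h

lemma mp_unique {n : ℕ} {W X Y : Matrix (Fin n) (Fin n) ℝ}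
    (hX : IsMoorePenrose W X) (hY : IsMoorePenrose W Y) : X = Y := by
  obtain ⟨hX1, hX2, hX3, hX4⟩ := hX
  obtain ⟨hY1, hY2, hY3, hY4⟩ := hY
  have hWX : W * X = W * Y := by
    calc W * X = (W * X)ᵀ := hX3.symm
    _ = ((W * Y * W) * X)ᵀ := by rw [hY1]
    _ = ((W * Y) * (W * X))ᵀ := by noncomm_ring
    _ = (W * X)ᵀ * (W * Y)ᵀ := by rw [transpose_mul]
    _ = (W * X) * (W * Y) := by rw [hX3, hY3]
    _ = (W * X * W) * Y := by noncomm_ring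
    _ = W * Y := by rw [hX1]
  have hXW : X * W = Y * W := by
    calc X * W = (X * W)ᵀ := hX4.symm
    _ = (X * (W * Y * W))ᵀ := by rw [hY1]
    _ = ((X * W) * (Y * W))ᵀ := by noncomm_ring
    _ = (Y * W)ᵀ * (X * W)ᵀ := by rw [transpose_mul]
    _ = (Y * W) * (X * W) := by rw [hX4, hY4]
    _ = Y * (W * X * W) := by noncomm_ring
    _ = Y * W := by rw [hX1]
  calc X = X * W * X := hX2.symm
  _ = Y * W * X := by rw [hXW]
  _ = Y * (W * Y) := by rw [mul_assoc, hWX]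
  _ = Y := by rw [← mul_assoc, hY2]

lemma mp_diag {n : ℕ} {V : Matrix (Fin n) (Fin n) ℝ} (hV : Vᵀ * V = 1)
    (μ : Fin n → ℝ) :
    IsMoorePenrose (V * diagonal μ * Vᵀ) (V * diagonal (fun i => (μ i)⁻¹) * Vᵀ) := by
  have key : ∀ a b : Fin n → ℝ, (V * diagonal a * Vᵀ) * (V * diagonal b * Vᵀ)
      = V * diagonal (fun i => a i * b i) * Vᵀ := by
    intro a b
    calc (V * diagonal a * Vᵀ) * (V * diagonal b * Vᵀ)
        = V * diagonal a * (Vᵀ * V) * diagonal b * Vᵀ := by noncomm_ring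
    _ = V * (diagonal a * diagonal b) * Vᵀ := by rw [hV, mul_one, mul_assoc V]
    _ = _ := by rw [diagonal_mul_diagonal]
  have tkey : ∀ a : Fin n → ℝ, (V * diagonal a * Vᵀ)ᵀ = V * diagonal a * Vᵀ := by
    intro a
    rw [transpose_mul, transpose_mul, transpose_transpose, diagonal_transpose, mul_assoc]
  have hfun1 : (fun i => μ i * (μ i)⁻¹ * μ i) = μ := by
    funext i
    rcases eq_or_ne (μ i) 0 with h | h
    · simp [h]
    · field_simp
  have hfun2 : (fun i => (μ i)⁻¹ * μ i * (μ i)⁻¹) = fun i => (μ i)⁻¹ := by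
    funext i
    rcases eq_or_ne (μ i) 0 with h | h
    · simp [h]
    · field_simp
  refine ⟨?_, ?_, ?_, ?_⟩
  · rw [key, key]
    rw [hfun1]
  · rw [key, key]
    rw [hfun2]
  · rw [key, tkey]
  · rw [key, tkey]

lemma quad_eq {n : ℕ} {U : Matrix (Fin n) (Fin n) ℝ}
    (hU2 : U * Uᵀ = 1) (β : Fin n → ℝ) (y : Fin n → ℝ) :
    y ⬝ᵥ ((U * diagonal β * Uᵀ) *ᵥ y) = ∑ i, β i * ((Uᵀ *ᵥ y) i)^2 ∧
    y ⬝ᵥ y = ∑ i, ((Uᵀ *ᵥ y) i)^2 := by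
  set c := Uᵀ *ᵥ y with hc
  have hmove : ∀ z : Fin n → ℝ, y ⬝ᵥ (U *ᵥ z) = c ⬝ᵥ z := by
    intro z
    rw [dotProduct_mulVec, hc, mulVec_transpose]
  constructor
  · have : (U * diagonal β * Uᵀ) *ᵥ y = U *ᵥ (diagonal β *ᵥ c) := by
      rw [hc, ← mulVec_mulVec, ← mulVec_mulVec]
    rw [this, hmove]
    simp only [dotProduct, mulVec_diagonal]
    exact Finset.sum_congr rfl fun i _ => by ring
  · have hy : U *ᵥ c = y := by rw [hc, mulVec_mulVec, hU2, one_mulVec]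
    have := hmove c
    rw [hy] at this
    rw [this]
    simp only [dotProduct]
    exact Finset.sum_congr rfl fun i _ => by ring

set_option maxHeartbeats 2000000 in
/-- Bounds on the condition number `s(x*) = ‖A*‖‖(PA*P)†‖`:
`β₁/β_{n-1} ≤ s ≤ β₁/βₙ`, in particular `1 ≤ s ≤ κ(A*)`. -/
theorem condition_number_solution_bounds {n : ℕ} (hn : 2 ≤ n)
    (As : Matrix (Fin n) (Fin n) ℝ)
    (β : Fin n → ℝ) (U : Matrix (Fin n) (Fin n) ℝ)
    (hU : U ∈ Matrix.orthogonalGroup (Fin n) ℝ)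
    (hdec : ∀ i j : Fin n, i ≤ j → β j ≤ β i)
    (hpos : 0 < β ⟨n - 1, by omega⟩)
    (hspec : As = U * Matrix.diagonal β * Uᵀ)
    (xs : Fin n → ℝ) (Δ : ℝ) (hΔ : 0 < Δ) (hxs : enorm₂ xs = Δ)
    (P : Matrix (Fin n) (Fin n) ℝ)
    (hP : P = 1 - (Δ ^ 2)⁻¹ • vecMulVec xs xs)
    (X : Matrix (Fin n) (Fin n) ℝ) (hX : IsMoorePenrose (P * As * P) X) :
    β ⟨0, by omega⟩ / β ⟨n - 2, by omega⟩ ≤ specNorm As * specNorm X ∧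
    specNorm As * specNorm X ≤ β ⟨0, by omega⟩ / β ⟨n - 1, by omega⟩ ∧
    1 ≤ specNorm As * specNorm X := by
  have hn0 : 0 < n := by omega
  set i1 : Fin n := ⟨0, by omega⟩ with hi1
  set i2 : Fin n := ⟨n - 2, by omega⟩ with hi2
  set i3 : Fin n := ⟨n - 1, by omega⟩ with hi3
  set b1 := β i1
  set b2 := β i2
  set b3 := β i3
  -- basic order facts
  have hble : ∀ i : Fin n, b3 ≤ β i ∧ β i ≤ b1 := by
    intro i
    constructor
    · exact hdec i i3 (by simp [hi3, Fin.le_def]; omega)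
    · exact hdec i1 i (by simp [hi1, Fin.le_def])
  have hb3 : 0 < b3 := hpos
  have hβpos : ∀ i, 0 < β i := fun i => lt_of_lt_of_le hb3 (hble i).1
  have hb23 : b3 ≤ b2 := (hble i2).1
  have hb12 : b2 ≤ b1 := (hble i2).2
  -- orthogonality of U
  have hU1 : Uᵀ * U = 1 := by
    have := (Matrix.mem_unitaryGroup_iff').mp hU
    rwa [Matrix.star_eq_conjTranspose, conjTranspose_eq_transpose_of_trivial] at this
  have hU2 : U * Uᵀ = 1 := by
    have := (Matrix.mem_unitaryGroup_iff).mp hU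
    rwa [Matrix.star_eq_conjTranspose, conjTranspose_eq_transpose_of_trivial] at this
  -- quadratic form facts for As
  have hquadAs : ∀ y : Fin n → ℝ, y ⬝ᵥ (As *ᵥ y) = ∑ i, β i * ((Uᵀ *ᵥ y) i)^2 := by
    intro y
    rw [hspec]
    exact (quad_eq hU2 β y).1
  have hnorm_eq : ∀ y : Fin n → ℝ, y ⬝ᵥ y = ∑ i, ((Uᵀ *ᵥ y) i)^2 :=
    fun y => (quad_eq hU2 β y).2
  have hlow : ∀ y : Fin n → ℝ, b3 * (y ⬝ᵥ y) ≤ y ⬝ᵥ (As *ᵥ y) := by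
    intro y
    rw [hquadAs, hnorm_eq, Finset.mul_sum]
    apply Finset.sum_le_sum
    intro i _
    exact mul_le_mul_of_nonneg_right (hble i).1 (sq_nonneg _)
  have hPD : ∀ y : Fin n → ℝ, y ⬝ᵥ (As *ᵥ y) = 0 → y = 0 := by
    intro y hy
    have h1 := hlow y
    rw [hy] at h1
    have h2 : 0 ≤ y ⬝ᵥ y := by
      rw [hnorm_eq]; positivity
    have : y ⬝ᵥ y = 0 := le_antisymm (by nlinarith) h2
    exact dotProduct_self_eq_zero.mp this
  -- facts about xs and P
  have hxx : xs ⬝ᵥ xs = Δ ^ 2 := by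
    have h0 : 0 ≤ xs ⬝ᵥ xs :=
      Finset.sum_nonneg fun i _ => mul_self_nonneg (xs i)
    have := hxs
    rw [enorm₂] at this
    rw [← this, Real.sq_sqrt h0]
  have hPt : Pᵀ = P := by
    rw [hP, transpose_sub, transpose_one, transpose_smul]
    congr 1
    unfold vecMulVec
    ext i j
    simp [mul_comm]
  have hvmv : ∀ y : Fin n → ℝ, vecMulVec xs xs *ᵥ y = (xs ⬝ᵥ y) • xs := by
    intro y
    funext i
    simp only [mulVec, vecMulVec_apply, dotProduct, Pi.smul_apply, smul_eq_mul]
    rw [Finset.sum_mul]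
    exact Finset.sum_congr rfl fun j _ => by ring
  have hPmv : ∀ y : Fin n → ℝ, P *ᵥ y = y - ((Δ ^ 2)⁻¹ * (xs ⬝ᵥ y)) • xs := by
    intro y
    rw [hP, sub_mulVec, one_mulVec, smul_mulVec, hvmv, smul_smul]
  have hPxs : ∀ y : Fin n → ℝ, xs ⬝ᵥ y = 0 → P *ᵥ y = y := by
    intro y hy
    rw [hPmv, hy, mul_zero, zero_smul, sub_zero]
  have hPker : ∀ y : Fin n → ℝ, P *ᵥ y = 0 → y = ((Δ ^ 2)⁻¹ * (xs ⬝ᵥ y)) • xs := by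
    intro y hy
    rw [hPmv] at hy
    linear_combination (norm := module) hy
  set W := P * As * P with hWdef
  have hWmv : ∀ y : Fin n → ℝ, W *ᵥ y = P *ᵥ (As *ᵥ (P *ᵥ y)) := by
    intro y
    rw [hWdef, ← mulVec_mulVec, ← mulVec_mulVec]
  have hdotP : ∀ y z : Fin n → ℝ, y ⬝ᵥ (P *ᵥ z) = (P *ᵥ y) ⬝ᵥ z := by
    intro y z
    rw [dotProduct_mulVec, ← mulVec_transpose, hPt]
  have hquadW : ∀ y : Fin n → ℝ, y ⬝ᵥ (W *ᵥ y) = (P *ᵥ y) ⬝ᵥ (As *ᵥ (P *ᵥ y)) := by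
    intro y
    rw [hWmv, hdotP]
  -- Hermitian structure of W
  have hAst : Asᵀ = As := by
    rw [hspec, transpose_mul, transpose_mul, transpose_transpose, diagonal_transpose, mul_assoc]
  have hW : W.IsHermitian := by
    rw [IsHermitian, conjTranspose_eq_transpose_of_trivial, hWdef, transpose_mul, transpose_mul,
      hPt, hAst, mul_assoc]
  set μ : Fin n → ℝ := hW.eigenvalues with hμ
  set V : Matrix (Fin n) (Fin n) ℝ := (hW.eigenvectorUnitary : Matrix (Fin n) (Fin n) ℝ) with hV
  have hVmem : V ∈ Matrix.unitaryGroup (Fin n) ℝ := hW.eigenvectorUnitary.2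
  have hV1 : Vᵀ * V = 1 := by
    have := (Matrix.mem_unitaryGroup_iff').mp hVmem
    rwa [Matrix.star_eq_conjTranspose, conjTranspose_eq_transpose_of_trivial] at this
  have hV2 : V * Vᵀ = 1 := by
    have := (Matrix.mem_unitaryGroup_iff).mp hVmem
    rwa [Matrix.star_eq_conjTranspose, conjTranspose_eq_transpose_of_trivial] at this
  have hspecW : W = V * diagonal μ * Vᵀ := by
    have := hW.spectral_theorem
    rw [Unitary.conjStarAlgAut_apply, Matrix.star_eq_conjTranspose, conjTranspose_eq_transpose_of_trivial] at this
    convert this using 3 <;> rfl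
  -- identify X
  have hXeq : X = V * diagonal (fun i => (μ i)⁻¹) * Vᵀ := by
    refine mp_unique ?_ (mp_diag hV1 μ)
    rw [← hspecW]
    exact hX
  -- eigenvalue equations, column version
  have hcol : ∀ i : Fin n, W *ᵥ (fun k => V k i) = μ i • (fun k => V k i) := by
    intro i
    have hWV : W * V = V * diagonal μ := by
      rw [hspecW, mul_assoc, mul_assoc, hV1, mul_one]
    funext k
    have h1 : (W * V) k i = (V * diagonal μ) k i := by rw [hWV]
    rw [mul_diagonal] at h1
    simp only [mul_apply] at h1
    simp only [mulVec, dotProduct, Pi.smul_apply, smul_eq_mul]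
    rw [h1]; ring
  have hcolnorm : ∀ i : Fin n, (fun k => V k i) ⬝ᵥ (fun k => V k i) = 1 := by
    intro i
    have h1 : (Vᵀ * V) i i = (1 : Matrix (Fin n) (Fin n) ℝ) i i := by rw [hV1]
    rw [one_apply_eq] at h1
    simp only [mul_apply, transpose_apply] at h1
    simpa [dotProduct] using h1
  -- quadratic form of eigenvector i equals μ i
  have hquadvi : ∀ i : Fin n, (fun k => V k i) ⬝ᵥ (W *ᵥ (fun k => V k i)) = μ i := by
    intro i
    rw [hcol, dotProduct_smul, smul_eq_mul, hcolnorm, mul_one]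
  -- Fact: each nonzero eigenvalue is ≥ b3
  have hPW : P * W = W := by
    have hPP : P * P = P := by
      rw [hP]
      have : vecMulVec xs xs * vecMulVec xs xs = (Δ^2) • vecMulVec xs xs := by
        ext i j
        simp only [mul_apply, vecMulVec_apply, Matrix.smul_apply, smul_eq_mul]
        rw [← hxx]
        simp only [dotProduct]
        rw [Finset.sum_mul]
        exact Finset.sum_congr rfl fun k _ => by ring
      simp only [sub_mul, mul_sub, one_mul, mul_one, smul_mul_assoc, mul_smul_comm, this,
        smul_smul]
      match_scalars
      · ring
      · field_simp
        ring
    rw [hWdef, ← mul_assoc, ← mul_assoc, hPP]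
  have hfact1 : ∀ i : Fin n, μ i ≠ 0 → b3 ≤ μ i := by
    intro i hi
    set v : Fin n → ℝ := fun k => V k i with hv
    have hPv : P *ᵥ v = v := by
      have h1 : P *ᵥ (W *ᵥ v) = W *ᵥ v := by rw [mulVec_mulVec, hPW]
      rw [hcol i, mulVec_smul] at h1
      have := smul_right_injective (Fin n → ℝ) hi h1
      exact this
    have h2 : μ i = v ⬝ᵥ (As *ᵥ v) := by
      rw [← hquadvi i, hquadW, hPv]
    have h3 := hlow v
    rw [hcolnorm i, mul_one] at h3
    rw [h2]; exact h3
  -- Fact: zero eigenvectors are multiples of xs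
  have hfact2 : ∀ i : Fin n, μ i = 0 → ∀ y : Fin n → ℝ, xs ⬝ᵥ y = 0 →
      (fun k => V k i) ⬝ᵥ y = 0 := by
    intro i hi y hy
    set v : Fin n → ℝ := fun k => V k i with hv
    have h1 : W *ᵥ v = 0 := by rw [hcol i, hi, zero_smul]
    have h2 : (P *ᵥ v) ⬝ᵥ (As *ᵥ (P *ᵥ v)) = 0 := by
      rw [← hquadW, h1, dotProduct_zero]
    have h3 : P *ᵥ v = 0 := hPD _ h2
    have h4 := hPker v h3
    show v ⬝ᵥ y = 0
    rw [h4, smul_dotProduct, smul_eq_mul, hy, mul_zero]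
  -- Fact: some nonzero eigenvalue is ≤ b2
  have hfact3 : ∃ i : Fin n, μ i ≠ 0 ∧ μ i ≤ b2 := by
    by_contra hcon
    push_neg at hcon
    -- the two relevant columns of U
    set u : Fin n → ℝ := fun k => U k i2 with hu
    set w : Fin n → ℝ := fun k => U k i3 with hw
    have hi23 : i2 ≠ i3 := by
      simp only [hi2, hi3, Ne, Fin.mk.injEq]
      omega
    have hcolU : ∀ j : Fin n, As *ᵥ (fun k => U k j) = β j • (fun k => U k j) := by
      intro j
      have hAU : As * U = U * diagonal β := by
        rw [hspec, mul_assoc, mul_assoc, hU1, mul_one]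
      funext k
      have h1 : (As * U) k j = (U * diagonal β) k j := by rw [hAU]
      rw [mul_diagonal] at h1
      simp only [mul_apply] at h1
      simp only [mulVec, dotProduct, Pi.smul_apply, smul_eq_mul]
      rw [h1]; ring
    have hUcolnorm : ∀ j j' : Fin n, (fun k => U k j) ⬝ᵥ (fun k => U k j')
        = if j = j' then 1 else 0 := by
      intro j j'
      have h1 : (Uᵀ * U) j j' = (1 : Matrix (Fin n) (Fin n) ℝ) j j' := by rw [hU1]
      rw [one_apply] at h1
      simp only [mul_apply, transpose_apply] at h1
      simpa [dotProduct] using h1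
    have huu : u ⬝ᵥ u = 1 := by rw [hu]; simpa using hUcolnorm i2 i2
    have hww : w ⬝ᵥ w = 1 := by rw [hw]; simpa using hUcolnorm i3 i3
    have huw : u ⬝ᵥ w = 0 := by rw [hu, hw]; simpa [hi23] using hUcolnorm i2 i3
    have hwu : w ⬝ᵥ u = 0 := by rw [hu, hw]; simpa [hi23.symm] using hUcolnorm i3 i2
    -- choose coefficients s t
    obtain ⟨s, t, hst0, hstpos⟩ : ∃ s t : ℝ, s * (xs ⬝ᵥ u) + t * (xs ⬝ᵥ w) = 0 ∧
        0 < s^2 + t^2 := by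
      rcases eq_or_ne (xs ⬝ᵥ u) 0 with h0 | h0
      · exact ⟨1, 0, by simp [h0], by norm_num⟩
      · refine ⟨xs ⬝ᵥ w, -(xs ⬝ᵥ u), by ring, ?_⟩
        have : 0 < (xs ⬝ᵥ u)^2 := by positivity
        nlinarith [sq_nonneg (xs ⬝ᵥ w)]
    set y : Fin n → ℝ := s • u + t • w with hy
    have hxsy : xs ⬝ᵥ y = 0 := by
      rw [hy, dotProduct_add, dotProduct_smul, dotProduct_smul, smul_eq_mul, smul_eq_mul]
      linarith [hst0]
    have hyy : y ⬝ᵥ y = s^2 + t^2 := by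
      rw [hy]
      simp only [dotProduct_add, add_dotProduct, dotProduct_smul, smul_dotProduct,
        smul_eq_mul]
      rw [huu, hww, huw, hwu]
      ring
    have hAsy : As *ᵥ y = (s * b2) • u + (t * b3) • w := by
      rw [hy, mulVec_add, mulVec_smul, mulVec_smul, hcolU i2, hcolU i3]
      rw [smul_smul, smul_smul]
    have hqy : y ⬝ᵥ (As *ᵥ y) = b2 * s^2 + b3 * t^2 := by
      rw [hAsy, hy]
      simp only [dotProduct_add, add_dotProduct, dotProduct_smul, smul_dotProduct, smul_eq_mul]
      rw [huu, hww, huw, hwu]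
      ring
    have hqyle : y ⬝ᵥ (As *ᵥ y) ≤ b2 * (y ⬝ᵥ y) := by
      rw [hqy, hyy]
      nlinarith [sq_nonneg t]
    -- expansion of y in eigenbasis of W
    set c : Fin n → ℝ := Vᵀ *ᵥ y with hc
    have hquadWy := (quad_eq hV2 μ y).1
    rw [← hspecW] at hquadWy
    have hyyc := (quad_eq hV2 μ y).2
    have hci : ∀ i : Fin n, μ i = 0 → c i = 0 := by
      intro i hi
      have := hfact2 i hi y hxsy
      rw [hc]
      simp only [mulVec, dotProduct, transpose_apply]
      simpa [dotProduct] using this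
    have hczero : ∃ i : Fin n, c i ≠ 0 := by
      by_contra hall
      push_neg at hall
      have : y ⬝ᵥ y = 0 := by
        rw [hyyc]
        apply Finset.sum_eq_zero
        intro i _
        rw [show (Vᵀ *ᵥ y) i = c i from rfl, hall i]
        ring
      rw [hyy] at this
      linarith
    obtain ⟨i0, hi0⟩ := hczero
    have hWy : y ⬝ᵥ (W *ᵥ y) = y ⬝ᵥ (As *ᵥ y) := by
      rw [hquadW, hPxs y hxsy]
    have hgt : b2 * (y ⬝ᵥ y) < y ⬝ᵥ (W *ᵥ y) := by
      rw [hquadWy, hyyc, Finset.mul_sum]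
      apply Finset.sum_lt_sum
      · intro i _
        rcases eq_or_ne (μ i) 0 with h | h
        · rw [show (Vᵀ *ᵥ y) i = c i from rfl, hci i h]
          simp
        · have := le_of_lt (hcon i h)
          exact mul_le_mul_of_nonneg_right this (sq_nonneg _)
      · refine ⟨i0, Finset.mem_univ _, ?_⟩
        have hμi0 : μ i0 ≠ 0 := by
          intro h
          exact hi0 (hci i0 h)
        have h1 : b2 < μ i0 := hcon i0 hμi0
        have h2 : 0 < ((Vᵀ *ᵥ y) i0)^2 := by
          have : (Vᵀ *ᵥ y) i0 = c i0 := rfl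
          rw [this]
          positivity
        exact mul_lt_mul_of_pos_right h1 h2
    rw [hWy] at hgt
    linarith
  -- compute the two norms
  have hnormAs : specNorm As = b1 := by
    rw [specNorm_eq_norm, hspec]
    have hUmem : U ∈ Matrix.unitaryGroup (Fin n) ℝ := hU
    rw [norm_conj_unitary hn _ _ hUmem]
    apply le_antisymm
    · apply diag_norm_le _ _ (le_of_lt (lt_of_lt_of_le hb3 (le_trans hb23 hb12)))
      intro i
      rw [abs_of_pos (hβpos i)]
      exact (hble i).2
    · have := le_diag_norm β i1
      rwa [abs_of_pos (hβpos i1)] at this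
  have hnormX : specNorm X = ‖diagonal (fun i => (μ i)⁻¹)‖ := by
    rw [specNorm_eq_norm, hXeq, norm_conj_unitary hn _ _ hVmem]
  -- bounds on ‖X‖
  have hb1 : 0 < b1 := lt_of_lt_of_le hb3 (le_trans hb23 hb12)
  have hb2 : 0 < b2 := lt_of_lt_of_le hb3 hb23
  have hXub : specNorm X ≤ b3⁻¹ := by
    rw [hnormX]
    apply diag_norm_le _ _ (inv_nonneg.mpr hb3.le)
    intro i
    rcases eq_or_ne (μ i) 0 with h | h
    · rw [h]
      simpa using inv_nonneg.mpr hb3.le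
    · have h1 := hfact1 i h
      rw [abs_of_pos (inv_pos.mpr (lt_of_lt_of_le hb3 h1))]
      exact inv_anti₀ hb3 h1
  have hXlb : b2⁻¹ ≤ specNorm X := by
    obtain ⟨i, hi, hile⟩ := hfact3
    have h1 : 0 < μ i := lt_of_lt_of_le hb3 (hfact1 i hi)
    have h2 : b2⁻¹ ≤ (μ i)⁻¹ := inv_anti₀ h1 hile
    rw [hnormX]
    refine le_trans h2 ?_
    have := le_diag_norm (fun i => (μ i)⁻¹) i
    rwa [abs_of_pos (inv_pos.mpr h1)] at this
  refine ⟨?_, ?_, ?_⟩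
  · rw [hnormAs, div_eq_mul_inv]
    exact mul_le_mul_of_nonneg_left hXlb (le_of_lt hb1)
  · rw [hnormAs, div_eq_mul_inv]
    exact mul_le_mul_of_nonneg_left hXub (le_of_lt hb1)
  · have h1 : (1:ℝ) ≤ b1 / b2 := by
      rw [le_div_iff₀ hb2, one_mul]
      exact hb12
    refine le_trans h1 ?_
    rw [hnormAs, div_eq_mul_inv]
    exact mul_le_mul_of_nonneg_left hXlb (le_of_lt hb1)
end

section
/- Let A, E ∈ R^{n×n} be symmetric, g, e ∈ R^n, ε ∈ R, and suppose both A + λ*I and A(ε) + λ*I are positive definite (where A(ε) = A + εE). Let x* = -(A + λ*I)⁻¹g, and let λ*(ε) be any real number with A(ε) + λ*(ε)I positive definite and x*(ε) = -(A(ε) + λ*(ε)I)⁻¹(g + εe). Then (I + (λ*(ε) - λ*)(A(ε) + λ*I)⁻¹)(x*(ε) - x*) = -(λ*(ε) - λ*)(A(ε) + λ*I)⁻¹x* - ε(A(ε) + λ*I)⁻¹(Ex* + e). -/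
open Matrix

/-- Exact algebraic identity relating the perturbed and unperturbed TRS solutions:
`(I + (λ*(ε)-λ*)(A(ε)+λ*I)⁻¹)(x*(ε)-x*) = -(λ*(ε)-λ*)(A(ε)+λ*I)⁻¹x* - ε(A(ε)+λ*I)⁻¹(Ex*+e)`. -/
theorem perturbed_solution_identity {n : ℕ} (A E : Matrix (Fin n) (Fin n) ℝ)
    (hA : A.IsSymm) (hE : E.IsSymm) (g e : Fin n → ℝ) (ε lams lamse : ℝ)
    (h1 : (A + lams • (1 : Matrix (Fin n) (Fin n) ℝ)).PosDef)
    (h2 : (A + ε • E + lams • (1 : Matrix (Fin n) (Fin n) ℝ)).PosDef)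
    (h3 : (A + ε • E + lamse • (1 : Matrix (Fin n) (Fin n) ℝ)).PosDef)
    (xs xse : Fin n → ℝ)
    (hxs : xs = -((A + lams • (1 : Matrix (Fin n) (Fin n) ℝ))⁻¹.mulVec g))
    (hxse : xse = -((A + ε • E + lamse • (1 : Matrix (Fin n) (Fin n) ℝ))⁻¹.mulVec
      (g + ε • e))) :
    (1 + (lamse - lams) • (A + ε • E + lams • (1 : Matrix (Fin n) (Fin n) ℝ))⁻¹).mulVec
        (xse - xs) =
      -((lamse - lams) •
          (A + ε • E + lams • (1 : Matrix (Fin n) (Fin n) ℝ))⁻¹.mulVec xs) -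
        ε • (A + ε • E + lams • (1 : Matrix (Fin n) (Fin n) ℝ))⁻¹.mulVec
          (E.mulVec xs + e) := by
  set B := A + lams • (1 : Matrix (Fin n) (Fin n) ℝ) with hB
  set C := A + ε • E + lams • (1 : Matrix (Fin n) (Fin n) ℝ) with hC
  set D := A + ε • E + lamse • (1 : Matrix (Fin n) (Fin n) ℝ) with hD
  have hBu : IsUnit B.det := isUnit_iff_ne_zero.mpr (ne_of_gt h1.det_pos)
  have hCu : IsUnit C.det := isUnit_iff_ne_zero.mpr (ne_of_gt h2.det_pos)
  have hDu : IsUnit D.det := isUnit_iff_ne_zero.mpr (ne_of_gt h3.det_pos)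
  -- D = C + (lamse - lams) • 1
  have hDC : D = C + (lamse - lams) • (1 : Matrix (Fin n) (Fin n) ℝ) := by
    rw [hD, hC, sub_smul]; abel
  -- LHS matrix equals C⁻¹ * D
  have hM : (1 + (lamse - lams) • C⁻¹) = C⁻¹ * D := by
    rw [hDC, Matrix.mul_add, Matrix.nonsing_inv_mul C hCu, Matrix.mul_smul, Matrix.mul_one]
  -- B.mulVec xs = -g
  have hBxs : B.mulVec xs = -g := by
    rw [hxs, Matrix.mulVec_neg, Matrix.mulVec_mulVec, Matrix.mul_nonsing_inv B hBu,
      Matrix.one_mulVec]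
  -- D.mulVec xse = -(g + ε • e)
  have hDxse : D.mulVec xse = -(g + ε • e) := by
    rw [hxse, Matrix.mulVec_neg, Matrix.mulVec_mulVec, Matrix.mul_nonsing_inv D hDu,
      Matrix.one_mulVec]
  -- D = B + ε • E + (lamse - lams) • 1
  have hDB : D = B + ε • E + (lamse - lams) • (1 : Matrix (Fin n) (Fin n) ℝ) := by
    rw [hD, hB, sub_smul]; abel
  have hDxs : D.mulVec xs = -g + ε • E.mulVec xs + (lamse - lams) • xs := by
    rw [hDB, Matrix.add_mulVec, Matrix.add_mulVec, hBxs, Matrix.smul_mulVec,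
      Matrix.smul_mulVec, Matrix.one_mulVec]
  calc (1 + (lamse - lams) • C⁻¹).mulVec (xse - xs)
      = C⁻¹.mulVec (D.mulVec (xse - xs)) := by
        rw [hM, ← Matrix.mulVec_mulVec]
    _ = C⁻¹.mulVec (-((lamse - lams) • xs) - ε • (E.mulVec xs + e)) := by
        rw [Matrix.mulVec_sub, hDxse, hDxs]
        congr 1
        simp only [smul_add]
        abel
    _ = -((lamse - lams) • C⁻¹.mulVec xs) - ε • C⁻¹.mulVec (E.mulVec xs + e) := by
        rw [Matrix.mulVec_sub, Matrix.mulVec_neg, Matrix.mulVec_smul, Matrix.mulVec_smul]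
end

section
/- Consider A = diag(1, -1+γ), g = (1, γ)ᵀ, Δ = √5/2 with 0 < γ < 1, λ* = 1, x* = (-1/2, -1)ᵀ, A* = A + λ*I = diag(2, γ). Define s(λ*) = (‖A*⁻¹x*‖/(x*ᵀA*⁻¹x*))·max{1, Δ}. Then s(λ*) = √5·√(16+γ²)/(8+γ) < 6/5, i.e. the Lagrange multiplier is well-conditioned even though κ(A*) = 2/γ → ∞ as γ → 0. -/
open Matrix

noncomputable def enorm {m : Type*} [Fintype m] (x : m → ℝ) : ℝ := Real.sqrt (x ⬝ᵥ x)

/-- For `A* = diag(2,γ)`, `x* = (-1/2,-1)ᵀ`, `Δ = √5/2` and `0 < γ < 1`, the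
condition number of the Lagrange multiplier satisfies
`s(λ*) = ‖A*⁻¹x*‖/(x*ᵀA*⁻¹x*)·max{1,Δ} = √5·√(16+γ²)/(8+γ) < 6/5`. -/
theorem example_multiplier_condition_number (γ : ℝ) (hγ : 0 < γ) (hγ1 : γ < 1) :
    let As : Matrix (Fin 2) (Fin 2) ℝ := !![2, 0; 0, γ]
    let xs : Fin 2 → ℝ := ![-1/2, -1]
    let Δ : ℝ := Real.sqrt 5 / 2
    _root_.enorm (As⁻¹.mulVec xs) / (xs ⬝ᵥ As⁻¹.mulVec xs) * max 1 Δ =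
        Real.sqrt 5 * Real.sqrt (16 + γ ^ 2) / (8 + γ) ∧
    Real.sqrt 5 * Real.sqrt (16 + γ ^ 2) / (8 + γ) < 6 / 5 := by
  intro As xs Δ
  have hγ' : γ ≠ 0 := ne_of_gt hγ
  have hinv : As⁻¹ = !![1/2, 0; 0, γ⁻¹] := by
    apply Matrix.inv_eq_right_inv
    ext i j
    fin_cases i <;> fin_cases j <;>
      simp [As, Matrix.mul_apply, Fin.sum_univ_succ, hγ', mul_inv_cancel₀] <;>
      norm_num
  have hmv : As⁻¹.mulVec xs = ![-1/4, -γ⁻¹] := by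
    rw [hinv]
    ext i
    fin_cases i <;> simp [xs, Matrix.mulVec, dotProduct, Fin.sum_univ_succ] <;> ring
  have hdot1 : (As⁻¹.mulVec xs) ⬝ᵥ (As⁻¹.mulVec xs) = 1/16 + γ⁻¹^2 := by
    rw [hmv]; simp [dotProduct, Fin.sum_univ_succ]; ring
  have hdot2 : xs ⬝ᵥ As⁻¹.mulVec xs = 1/8 + γ⁻¹ := by
    rw [hmv]; simp [xs, dotProduct, Fin.sum_univ_succ]; ring
  have hsq16 : (0:ℝ) ≤ 16 + γ^2 := by positivity
  have hnorm : _root_.enorm (As⁻¹.mulVec xs) = Real.sqrt (16 + γ^2) / (4*γ) := by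
    rw [_root_.enorm, hdot1]
    have h1 : (1/16 + γ⁻¹^2 : ℝ) = (16 + γ^2) / (4*γ)^2 := by
      field_simp; ring
    rw [h1, Real.sqrt_div hsq16, Real.sqrt_sq (by positivity)]
  have hmax : max 1 Δ = Real.sqrt 5 / 2 := by
    have h5 : (2:ℝ) ≤ Real.sqrt 5 := by
      nlinarith [Real.sq_sqrt (by norm_num : (0:ℝ) ≤ 5), Real.sqrt_nonneg 5]
    simp only [Δ]
    rw [max_eq_right]; linarith
  constructor
  · rw [hnorm, hdot2, hmax]
    have hs16 : (0:ℝ) ≤ Real.sqrt (16 + γ^2) := Real.sqrt_nonneg _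
    field_simp
    ring
  · have hmul : Real.sqrt 5 * Real.sqrt (16 + γ^2) = Real.sqrt (5 * (16 + γ^2)) :=
      (Real.sqrt_mul (by norm_num) _).symm
    rw [div_lt_iff₀ (by linarith), hmul]
    have : Real.sqrt (5 * (16 + γ^2)) < 6 / 5 * (8 + γ) := by
      rw [show (6:ℝ)/5 * (8+γ) = Real.sqrt ((6/5*(8+γ))^2) by
        rw [Real.sqrt_sq (by linarith)]]
      apply Real.sqrt_lt_sqrt (by positivity)
      nlinarith [sq_nonneg γ, sq_nonneg (1-γ)]
    linarith
end
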